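/- Fix i with 1 ≤ i ≤ 4. Let v = s_1 ∘ s_2 ∘ s_3 ∘ s_2 ∘ s_4 ∘ s_3 ∘ s_1 ∘ s_2 (rightmost factor applied first), let u be an element of the subgroup of the orthogonal group of ℝ^4 generated by {s_j : j ≠ 1} with u(α_j) a negative root for every j ≠ 1, and let u_i be an element of the subgroup generated by {s_j : j ∉ {1, i}} with u_i(α_j) a negative root for every j ∉ {1, i} (u and u_i are the longest elements of the corresponding parabolic Weyl groups). Set w_i = u_i ∘ u ∘ v. Then w_i⁻¹(α_i) is a negative root, and w_i⁻¹(α_j) is a positive root for every 1 ≤ j ≤ 4 with j ≠ i. -/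

import Mathlib

open scoped InnerProductSpace

private lemma sRefl_invol {V : Type*} [NormedAddCommGroup V] [InnerProductSpace ℝ V]
    (b x : V) :
    (x - (2 * ⟪x, b⟫_ℝ / ⟪b, b⟫_ℝ) • b) -
      (2 * ⟪x - (2 * ⟪x, b⟫_ℝ / ⟪b, b⟫_ℝ) • b, b⟫_ℝ / ⟪b, b⟫_ℝ) • b = x := by
  by_cases hb : b = 0
  · simp [hb]
  · have h : ⟪b, b⟫_ℝ ≠ 0 := fun h => hb (inner_self_eq_zero.mp h)
    have key : 2 * ⟪x - (2 * ⟪x, b⟫_ℝ / ⟪b, b⟫_ℝ) • b, b⟫_ℝ / ⟪b, b⟫_ℝ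
        = -(2 * ⟪x, b⟫_ℝ / ⟪b, b⟫_ℝ) := by
      rw [inner_sub_left, real_inner_smul_left]
      field_simp
      ring
    rw [key, neg_smul, sub_neg_eq_add, sub_add_cancel]

/-- The reflection `s_b : x ↦ x - (2⟪x,b⟫/⟪b,b⟫) • b`, as a permutation of `V`. -/
noncomputable def sRefl {V : Type*} [NormedAddCommGroup V] [InnerProductSpace ℝ V]
    (b : V) : Equiv.Perm V where
  toFun x := x - (2 * ⟪x, b⟫_ℝ / ⟪b, b⟫_ℝ) • b
  invFun x := x - (2 * ⟪x, b⟫_ℝ / ⟪b, b⟫_ℝ) • b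
  left_inv x := sRefl_invol b x
  right_inv x := sRefl_invol b x

/-- `E n i` is the `i`-th standard basis vector of `ℝ^n` (for indices `1 ≤ i ≤ n`). -/
noncomputable def E (n i : ℕ) : EuclideanSpace ℝ (Fin n) :=
  if h : 1 ≤ i ∧ i ≤ n then EuclideanSpace.single (⟨i - 1, by omega⟩ : Fin n) 1 else 0

/-- The simple roots of type `F₄`: `α₁ = e₂ - e₃`, `α₂ = e₃ - e₄`, `α₃ = e₄`,
`α₄ = (e₁ - e₂ - e₃ - e₄)/2`. -/
noncomputable def alphaF : ℕ → EuclideanSpace ℝ (Fin 4)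
  | 1 => E 4 2 - E 4 3
  | 2 => E 4 3 - E 4 4
  | 3 => E 4 4
  | 4 => (1 / 2 : ℝ) • (E 4 1 - E 4 2 - E 4 3 - E 4 4)
  | _ => 0

/-- The roots of type `F₄`: `±eᵢ`, `±eᵢ ± eⱼ` (`i < j`) and `(±e₁ ± e₂ ± e₃ ± e₄)/2`. -/
def RootF : Set (EuclideanSpace ℝ (Fin 4)) :=
  {x | (∃ i, 1 ≤ i ∧ i ≤ 4 ∧ (x = E 4 i ∨ x = -E 4 i)) ∨
    (∃ i j, 1 ≤ i ∧ i < j ∧ j ≤ 4 ∧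
      (x = E 4 i + E 4 j ∨ x = -(E 4 i + E 4 j) ∨ x = E 4 i - E 4 j ∨ x = E 4 j - E 4 i)) ∨
    (∃ ε : ℕ → ℝ, (∀ i, ε i = 1 ∨ ε i = -1) ∧
      x = (1 / 2 : ℝ) • (ε 1 • E 4 1 + ε 2 • E 4 2 + ε 3 • E 4 3 + ε 4 • E 4 4))}

/-- A positive root of type `F₄`: a root which is a nonnegative integer combination of
the simple roots. -/
def IsPosF (x : EuclideanSpace ℝ (Fin 4)) : Prop :=
  x ∈ RootF ∧ ∃ c : ℕ → ℕ, x = ∑ i ∈ Finset.Icc 1 4, (c i : ℝ) • alphaF i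

/-- A negative root of type `F₄`: the negative of a positive root. -/
def IsNegF (x : EuclideanSpace ℝ (Fin 4)) : Prop :=
  IsPosF (-x)

/-- The simple reflections `sᵢ = s_{αᵢ}` of type `F₄`. -/
noncomputable def sF (i : ℕ) : Equiv.Perm (EuclideanSpace ℝ (Fin 4)) :=
  sRefl (alphaF i)

/-- The highest root `α₀ = e₁ + e₂ = 2α₁ + 3α₂ + 4α₃ + 2α₄` of type `F₄`. -/
noncomputable def alpha0F : EuclideanSpace ℝ (Fin 4) :=
  E 4 1 + E 4 2

/-- `v = s₁ ∘ s₂ ∘ s₃ ∘ s₂ ∘ s₄ ∘ s₃ ∘ s₁ ∘ s₂` (rightmost factor applied first);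
recall that in `Equiv.Perm` the product `f * g` is the composition `f ∘ g`. -/
noncomputable def vF : Equiv.Perm (EuclideanSpace ℝ (Fin 4)) :=
  sF 1 * sF 2 * sF 3 * sF 2 * sF 4 * sF 3 * sF 1 * sF 2

-- ===================== auxiliary infrastructure =====================

private abbrev V4 := EuclideanSpace ℝ (Fin 4)

theorem Equiv.Perm.apply_inv_self {α : Type*} (f : Equiv.Perm α) (x : α) : f (f⁻¹ x) = x :=
  f.apply_symm_apply x

theorem Equiv.Perm.inv_apply_self {α : Type*} (f : Equiv.Perm α) (x : α) : f⁻¹ (f x) = x :=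
  f.symm_apply_apply x

noncomputable def cv (a b c d : ℝ) : V4 :=
  (WithLp.equiv 2 (Fin 4 → ℝ)).symm ![a, b, c, d]

lemma cv_inner (a b c d a' b' c' d' : ℝ) :
    ⟪cv a b c d, cv a' b' c' d'⟫_ℝ = a*a'+b*b'+c*c'+d*d' := by
  simp [cv, PiLp.inner_apply, Fin.sum_univ_four, RCLike.inner_apply]; ring

lemma cv_add (a b c d a' b' c' d' : ℝ) :
    cv a b c d + cv a' b' c' d' = cv (a+a') (b+b') (c+c') (d+d') := by
  simp only [cv]; ext i; fin_cases i <;> simp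

lemma cv_smul (r a b c d : ℝ) : r • cv a b c d = cv (r*a) (r*b) (r*c) (r*d) := by
  simp only [cv]; ext i; fin_cases i <;> simp

lemma cv_sub (a b c d a' b' c' d' : ℝ) :
    cv a b c d - cv a' b' c' d' = cv (a-a') (b-b') (c-c') (d-d') := by
  simp only [cv]; ext i; fin_cases i <;> simp

lemma cv_neg (a b c d : ℝ) : -cv a b c d = cv (-a) (-b) (-c) (-d) := by
  simp only [cv]; ext i; fin_cases i <;> simp

lemma cv_ext {a b c d a' b' c' d' : ℝ} (h1 : a = a') (h2 : b = b') (h3 : c = c')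
    (h4 : d = d') : cv a b c d = cv a' b' c' d' := by rw [h1, h2, h3, h4]

lemma E1cv : E 4 1 = cv 1 0 0 0 := by
  simp only [E]; norm_num
  ext i; fin_cases i <;> simp [EuclideanSpace.single, cv]
lemma E2cv : E 4 2 = cv 0 1 0 0 := by
  simp only [E]; norm_num
  ext i; fin_cases i <;> simp [EuclideanSpace.single, cv]
lemma E3cv : E 4 3 = cv 0 0 1 0 := by
  simp only [E]; norm_num
  ext i; fin_cases i <;> simp [EuclideanSpace.single, cv]
lemma E4cv : E 4 4 = cv 0 0 0 1 := by
  simp only [E]; norm_num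
  ext i; fin_cases i <;> simp [EuclideanSpace.single, cv]

lemma a1cv : alphaF 1 = cv 0 1 (-1) 0 := by
  show E 4 2 - E 4 3 = _
  rw [E2cv, E3cv, cv_sub]
  exact cv_ext (by norm_num) (by norm_num) (by norm_num) (by norm_num)
lemma a2cv : alphaF 2 = cv 0 0 1 (-1) := by
  show E 4 3 - E 4 4 = _
  rw [E3cv, E4cv, cv_sub]
  exact cv_ext (by norm_num) (by norm_num) (by norm_num) (by norm_num)
lemma a3cv : alphaF 3 = cv 0 0 0 1 := by
  show E 4 4 = _; rw [E4cv]
lemma a4cv : alphaF 4 = cv (1/2) (-(1/2)) (-(1/2)) (-(1/2)) := by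
  show (1/2 : ℝ) • (E 4 1 - E 4 2 - E 4 3 - E 4 4) = _
  rw [E1cv, E2cv, E3cv, E4cv, cv_sub, cv_sub, cv_sub, cv_smul]
  exact cv_ext (by norm_num) (by norm_num) (by norm_num) (by norm_num)

lemma sRefl_apply' {V : Type*} [NormedAddCommGroup V] [InnerProductSpace ℝ V] (b x : V) :
    sRefl b x = x - (2 * ⟪x, b⟫_ℝ / ⟪b, b⟫_ℝ) • b := rfl

lemma sF1_cv (a b c d : ℝ) : sF 1 (cv a b c d) = cv a c b d := by
  rw [sF, sRefl_apply', a1cv, cv_inner, cv_inner, cv_smul, cv_sub]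
  exact cv_ext (by ring) (by ring) (by ring) (by ring)
lemma sF2_cv (a b c d : ℝ) : sF 2 (cv a b c d) = cv a b d c := by
  rw [sF, sRefl_apply', a2cv, cv_inner, cv_inner, cv_smul, cv_sub]
  exact cv_ext (by ring) (by ring) (by ring) (by ring)
lemma sF3_cv (a b c d : ℝ) : sF 3 (cv a b c d) = cv a b c (-d) := by
  rw [sF, sRefl_apply', a3cv, cv_inner, cv_inner, cv_smul, cv_sub]
  exact cv_ext (by ring) (by ring) (by ring) (by ring)
lemma sF4_cv (a b c d : ℝ) :
    sF 4 (cv a b c d) = cv ((a+b+c+d)/2) ((a+b-c-d)/2) ((a-b+c-d)/2) ((a-b-c+d)/2) := by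
  rw [sF, sRefl_apply', a4cv, cv_inner, cv_inner, cv_smul, cv_sub]
  exact cv_ext (by ring) (by ring) (by ring) (by ring)

lemma sumc (c : ℕ → ℕ) :
    ∑ i ∈ Finset.Icc 1 4, (c i : ℝ) • alphaF i
      = cv ((c 4 : ℝ)/2) ((c 1 : ℝ) - (c 4 : ℝ)/2)
          (-(c 1 : ℝ) + (c 2 : ℝ) - (c 4 : ℝ)/2) (-(c 2 : ℝ) + (c 3 : ℝ) - (c 4 : ℝ)/2) := by
  rw [show (Finset.Icc 1 4 : Finset ℕ)
      = insert 1 (insert 2 (insert 3 ({4} : Finset ℕ))) from rfl]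
  rw [Finset.sum_insert (by decide), Finset.sum_insert (by decide),
    Finset.sum_insert (by decide), Finset.sum_singleton]
  rw [a1cv, a2cv, a3cv, a4cv, cv_smul, cv_smul, cv_smul, cv_smul, cv_add, cv_add, cv_add]
  exact cv_ext (by ring) (by ring) (by ring) (by ring)

lemma neg_eq_cv {x : V4} {a b c d : ℝ} (h : -x = cv a b c d) :
    x = cv (-a) (-b) (-c) (-d) := by rw [← cv_neg, ← h, neg_neg]

-- ===================== the invariant predicate =====================

structure Good (L : List V4) (C : V4 → ℝ) (g : Equiv.Perm V4) : Prop where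
  add : ∀ x y, g (x + y) = g x + g y
  smul : ∀ (r : ℝ) x, g (r • x) = r • g x
  inn : ∀ x y, ⟪g x, g y⟫_ℝ = ⟪x, y⟫_ℝ
  fix : ∀ f ∈ L, g f = f
  cub : ∀ x, C (g x) = C x

lemma good_sRefl (b : V4) (L : List V4) (C : V4 → ℝ) (hb : ⟪b, b⟫_ℝ ≠ 0)
    (hf : ∀ f ∈ L, ⟪f, b⟫_ℝ = 0) (hc : ∀ x, C (sRefl b x) = C x) :
    Good L C (sRefl b) := by
  constructor
  · intro x y
    simp only [sRefl_apply', inner_add_left]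
    rw [show 2 * (⟪x, b⟫_ℝ + ⟪y, b⟫_ℝ) / ⟪b, b⟫_ℝ
        = 2 * ⟪x, b⟫_ℝ / ⟪b, b⟫_ℝ + 2 * ⟪y, b⟫_ℝ / ⟪b, b⟫_ℝ by ring, add_smul]
    abel
  · intro r x
    simp only [sRefl_apply', real_inner_smul_left, smul_sub, smul_smul]
    rw [show 2 * (r * ⟪x, b⟫_ℝ) / ⟪b, b⟫_ℝ = r * (2 * ⟪x, b⟫_ℝ / ⟪b, b⟫_ℝ) by ring]
  · intro x y
    simp only [sRefl_apply', inner_sub_left, inner_sub_right, real_inner_smul_left,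
      real_inner_smul_right]
    rw [real_inner_comm b y]
    set px := ⟪x, b⟫_ℝ
    set py := ⟪y, b⟫_ℝ
    set pb := ⟪b, b⟫_ℝ
    field_simp
    ring
  · intro f hf'
    simp [sRefl_apply', hf f hf']
  · exact hc

lemma good_one (L : List V4) (C : V4 → ℝ) : Good L C 1 := by
  constructor <;> intros <;> rfl

lemma good_mul {L : List V4} {C : V4 → ℝ} {g h : Equiv.Perm V4} (hg : Good L C g)
    (hh : Good L C h) : Good L C (g * h) := by
  constructor
  · intro x y; simp only [Equiv.Perm.mul_apply, hh.add, hg.add]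
  · intro r x; simp only [Equiv.Perm.mul_apply, hh.smul, hg.smul]
  · intro x y; simp only [Equiv.Perm.mul_apply, hg.inn, hh.inn]
  · intro f hf; simp only [Equiv.Perm.mul_apply, hh.fix f hf, hg.fix f hf]
  · intro x; simp only [Equiv.Perm.mul_apply, hg.cub, hh.cub]

lemma good_inv {L : List V4} {C : V4 → ℝ} {g : Equiv.Perm V4} (hg : Good L C g) :
    Good L C g⁻¹ := by
  constructor
  · intro x y
    apply g.injective
    rw [hg.add, Equiv.Perm.apply_inv_self, Equiv.Perm.apply_inv_self,
      Equiv.Perm.apply_inv_self]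
  · intro r x
    apply g.injective
    rw [hg.smul, Equiv.Perm.apply_inv_self, Equiv.Perm.apply_inv_self]
  · intro x y
    have h := hg.inn (g⁻¹ x) (g⁻¹ y)
    rw [Equiv.Perm.apply_inv_self, Equiv.Perm.apply_inv_self] at h
    exact h.symm
  · intro f hf
    apply g.injective
    rw [Equiv.Perm.apply_inv_self, hg.fix f hf]
  · intro x
    have h := hg.cub (g⁻¹ x)
    rw [Equiv.Perm.apply_inv_self] at h
    exact h.symm

lemma good_closure {L : List V4} {C : V4 → ℝ} {S : Set (Equiv.Perm V4)}
    (hS : ∀ g ∈ S, Good L C g) {g : Equiv.Perm V4} (hg : g ∈ Subgroup.closure S) :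
    Good L C g := by
  induction hg using Subgroup.closure_induction with
  | mem x hx => exact hS x hx
  | one => exact good_one L C
  | mul x y _ _ hx hy => exact good_mul hx hy
  | inv x _ hx => exact good_inv hx

lemma apply_combo {g : Equiv.Perm V4} {L : List V4} {C : V4 → ℝ} (hg : Good L C g)
    {f1 f2 f3 f4 y1 y2 y3 y4 : V4} (h1 : g f1 = y1) (h2 : g f2 = y2) (h3 : g f3 = y3)
    (h4 : g f4 = y4) (t a b d : ℝ) :
    g (t • f1 + (a • f2 + (b • f3 + d • f4))) = t • y1 + (a • y2 + (b • y3 + d • y4)) := by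
  rw [hg.add, hg.add, hg.add, hg.smul, hg.smul, hg.smul, hg.smul, h1, h2, h3, h4]

lemma sRefl_selfadj (b x y : V4) : ⟪sRefl b x, y⟫_ℝ = ⟪x, sRefl b y⟫_ℝ := by
  simp only [sRefl_apply', inner_sub_left, inner_sub_right, real_inner_smul_left,
    real_inner_smul_right]
  rw [real_inner_comm b y]
  ring

noncomputable def C2 : V4 → ℝ := fun x =>
  ⟪x, cv 1 (-1) (-1) 3⟫_ℝ * ⟪x, cv 1 (-1) (-1) (-3)⟫_ℝ * ⟪x, cv (-2) 2 2 0⟫_ℝ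

lemma C2_sF3 (x : V4) : C2 (sF 3 x) = C2 x := by
  have h1 : sF 3 (cv 1 (-1) (-1) 3) = cv 1 (-1) (-1) (-3) := by
    rw [sF3_cv]; all_goals exact cv_ext (by norm_num) (by norm_num) (by norm_num) (by norm_num)
  have h2 : sF 3 (cv 1 (-1) (-1) (-3)) = cv 1 (-1) (-1) 3 := by
    rw [sF3_cv]; all_goals exact cv_ext (by norm_num) (by norm_num) (by norm_num) (by norm_num)
  have h3 : sF 3 (cv (-2) 2 2 0) = cv (-2) 2 2 0 := by
    rw [sF3_cv]; all_goals exact cv_ext (by norm_num) (by norm_num) (by norm_num) (by norm_num)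
  show C2 (sRefl (alphaF 3) x) = C2 x
  simp only [C2, sRefl_selfadj]
  show ⟪x, sF 3 _⟫_ℝ * ⟪x, sF 3 _⟫_ℝ * ⟪x, sF 3 _⟫_ℝ = _
  rw [h1, h2, h3]
  all_goals ring

lemma C2_sF4 (x : V4) : C2 (sF 4 x) = C2 x := by
  have h1 : sF 4 (cv 1 (-1) (-1) 3) = cv 1 (-1) (-1) 3 := by
    rw [sF4_cv]; all_goals exact cv_ext (by norm_num) (by norm_num) (by norm_num) (by norm_num)
  have h2 : sF 4 (cv 1 (-1) (-1) (-3)) = cv (-2) 2 2 0 := by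
    rw [sF4_cv]; all_goals exact cv_ext (by norm_num) (by norm_num) (by norm_num) (by norm_num)
  have h3 : sF 4 (cv (-2) 2 2 0) = cv 1 (-1) (-1) (-3) := by
    rw [sF4_cv]; all_goals exact cv_ext (by norm_num) (by norm_num) (by norm_num) (by norm_num)
  show C2 (sRefl (alphaF 4) x) = C2 x
  simp only [C2, sRefl_selfadj]
  show ⟪x, sF 4 _⟫_ℝ * ⟪x, sF 4 _⟫_ℝ * ⟪x, sF 4 _⟫_ℝ = _
  rw [h1, h2, h3]
  all_goals ring

-- ===================== diophantine candidate lemmas =====================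

lemma candQ2 (a b d : ℕ) (h : 2*a^2+b^2+d^2 = 2*a*b+b*d+2) :
    (a=1∧b=0∧d=0) ∨ (a=1∧b=2∧d=0) ∨ (a=1∧b=2∧d=2) := by
  have h' : 2*(a:ℤ)^2+(b:ℤ)^2+(d:ℤ)^2 = 2*a*b+b*d+2 := by exact_mod_cast h
  have hb : (b:ℤ) ≤ 2 := by nlinarith [sq_nonneg (2*(a:ℤ)-b), sq_nonneg (2*(d:ℤ)-b)]
  have hd : (d:ℤ) ≤ 2 := by nlinarith [sq_nonneg (2*(a:ℤ)-b), sq_nonneg (2*(d:ℤ)-b)]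
  have ha : (a:ℤ) ≤ 2 := by nlinarith [sq_nonneg (2*(a:ℤ)-b), sq_nonneg (2*(d:ℤ)-b)]
  have hb' : b ≤ 2 := by exact_mod_cast hb
  have hd' : d ≤ 2 := by exact_mod_cast hd
  have ha' : a ≤ 2 := by exact_mod_cast ha
  interval_cases a <;> interval_cases b <;> interval_cases d <;> omega

lemma candQ1 (a b d : ℕ) (h : 2*a^2+b^2+d^2 = 2*a*b+b*d+1) :
    (a=0∧b=0∧d=1) ∨ (a=0∧b=1∧d=0) ∨ (a=0∧b=1∧d=1) ∨ (a=1∧b=1∧d=0) ∨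
    (a=1∧b=1∧d=1) ∨ (a=1∧b=2∧d=1) := by
  have h' : 2*(a:ℤ)^2+(b:ℤ)^2+(d:ℤ)^2 = 2*a*b+b*d+1 := by exact_mod_cast h
  have hb : (b:ℤ) ≤ 2 := by nlinarith [sq_nonneg (2*(a:ℤ)-b), sq_nonneg (2*(d:ℤ)-b)]
  have hd : (d:ℤ) ≤ 2 := by nlinarith [sq_nonneg (2*(a:ℤ)-b), sq_nonneg (2*(d:ℤ)-b)]
  have ha : (a:ℤ) ≤ 2 := by nlinarith [sq_nonneg (2*(a:ℤ)-b), sq_nonneg (2*(d:ℤ)-b)]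
  have hb' : b ≤ 2 := by exact_mod_cast hb
  have hd' : d ≤ 2 := by exact_mod_cast hd
  have ha' : a ≤ 2 := by exact_mod_cast ha
  interval_cases a <;> interval_cases b <;> interval_cases d <;> omega

lemma candA2 (b d : ℕ) (h : b^2+d^2 = b*d+1) :
    (b=1∧d=0) ∨ (b=0∧d=1) ∨ (b=1∧d=1) := by
  have h' : (b:ℤ)^2+(d:ℤ)^2 = b*d+1 := by exact_mod_cast h
  have hb : (b:ℤ) ≤ 1 := by nlinarith [sq_nonneg ((b:ℤ)-d)]
  have hd : (d:ℤ) ≤ 1 := by nlinarith [sq_nonneg ((b:ℤ)-d)]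
  have hb' : b ≤ 1 := by exact_mod_cast hb
  have hd' : d ≤ 1 := by exact_mod_cast hd
  interval_cases b <;> interval_cases d <;> omega

lemma candC2 (a d : ℕ) (h : 2*a^2+d^2 = 2) : a=1∧d=0 := by
  have ha : a ≤ 1 := by nlinarith
  have hd : d ≤ 1 := by nlinarith
  interval_cases a <;> interval_cases d <;> omega

lemma candC1 (a d : ℕ) (h : 2*a^2+d^2 = 1) : a=0∧d=1 := by
  have ha : a ≤ 1 := by nlinarith
  have hd : d ≤ 1 := by nlinarith
  interval_cases a <;> interval_cases d <;> omega

lemma candB2 (a b : ℕ) (h : 2*a^2+b^2 = 2*a*b+2) : (a=1∧b=0) ∨ (a=1∧b=2) := by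
  have h' : 2*(a:ℤ)^2+(b:ℤ)^2 = 2*a*b+2 := by exact_mod_cast h
  have ha : (a:ℤ) ≤ 1 := by nlinarith [sq_nonneg ((a:ℤ)-b)]
  have hb : (b:ℤ) ≤ 2 := by nlinarith [sq_nonneg ((a:ℤ)-b)]
  have ha' : a ≤ 1 := by exact_mod_cast ha
  have hb' : b ≤ 2 := by exact_mod_cast hb
  interval_cases a <;> interval_cases b <;> omega

lemma candB1 (a b : ℕ) (h : 2*a^2+b^2 = 2*a*b+1) : (a=0∧b=1) ∨ (a=1∧b=1) := by
  have h' : 2*(a:ℤ)^2+(b:ℤ)^2 = 2*a*b+1 := by exact_mod_cast h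
  have ha : (a:ℤ) ≤ 1 := by nlinarith [sq_nonneg ((a:ℤ)-b)]
  have hb : (b:ℤ) ≤ 2 := by nlinarith [sq_nonneg ((a:ℤ)-b)]
  have ha' : a ≤ 1 := by exact_mod_cast ha
  have hb' : b ≤ 2 := by exact_mod_cast hb
  interval_cases a <;> interval_cases b <;> omega

-- ===================== coefficient extraction =====================

lemma neg_decomp {x : V4} (h : IsNegF x) : ∃ n1 n2 n3 n4 : ℕ,
    x = cv (-((n4:ℝ)/2)) (-((n1:ℝ) - (n4:ℝ)/2)) (-(-(n1:ℝ) + (n2:ℝ) - (n4:ℝ)/2))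
      (-(-(n2:ℝ) + (n3:ℝ) - (n4:ℝ)/2)) := by
  obtain ⟨-, c, hc⟩ := (h : IsPosF (-x))
  rw [sumc] at hc
  exact ⟨c 1, c 2, c 3, c 4, neg_eq_cv hc⟩

-- ===================== determination lemmas =====================

lemma detC3 {g : Equiv.Perm V4} {C : V4 → ℝ} (hg : Good [cv 1 1 0 0] C g)
    (k2 : IsNegF (g (alphaF 2))) (k3 : IsNegF (g (alphaF 3))) (k4 : IsNegF (g (alphaF 4))) :
    g (alphaF 2) = cv 0 0 (-1) 1 ∧ g (alphaF 3) = cv 0 0 0 (-1)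
      ∧ g (alphaF 4) = cv (-(1/2)) (1/2) (1/2) (1/2) := by
  have hf := hg.fix (cv 1 1 0 0) (by simp)
  obtain ⟨m1, m2, m3, m4, hx2⟩ := neg_decomp k2
  obtain ⟨n1, n2, n3, n4, hx3⟩ := neg_decomp k3
  obtain ⟨p1, p2, p3, p4, hx4⟩ := neg_decomp k4
  -- orthogonality to e1+e2 kills the alpha1 coefficient
  have hA2 := hg.inn (alphaF 2) (cv 1 1 0 0)
  rw [hf, hx2, cv_inner, a2cv, cv_inner] at hA2
  have hA3 := hg.inn (alphaF 3) (cv 1 1 0 0)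
  rw [hf, hx3, cv_inner, a3cv, cv_inner] at hA3
  have hA4 := hg.inn (alphaF 4) (cv 1 1 0 0)
  rw [hf, hx4, cv_inner, a4cv, cv_inner] at hA4
  have hm1 : m1 = 0 := by exact_mod_cast (by linarith : (m1:ℝ) = 0)
  have hn1 : n1 = 0 := by exact_mod_cast (by linarith : (n1:ℝ) = 0)
  have hp1 : p1 = 0 := by exact_mod_cast (by linarith : (p1:ℝ) = 0)
  subst hm1; subst hn1; subst hp1
  -- norms
  have hN2 := hg.inn (alphaF 2) (alphaF 2)
  rw [hx2, cv_inner, a2cv, cv_inner] at hN2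
  have hN3 := hg.inn (alphaF 3) (alphaF 3)
  rw [hx3, cv_inner, a3cv, cv_inner] at hN3
  have hN4 := hg.inn (alphaF 4) (alphaF 4)
  rw [hx4, cv_inner, a4cv, cv_inner] at hN4
  have q2 : 2*m2^2+m3^2+m4^2 = 2*m2*m3+m3*m4+2 := by
    have : ((2*m2^2+m3^2+m4^2 : ℕ) : ℝ) = ((2*m2*m3+m3*m4+2 : ℕ) : ℝ) := by
      push_cast
      linear_combination hN2
    exact_mod_cast this
  have q3 : 2*n2^2+n3^2+n4^2 = 2*n2*n3+n3*n4+1 := by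
    have : ((2*n2^2+n3^2+n4^2 : ℕ) : ℝ) = ((2*n2*n3+n3*n4+1 : ℕ) : ℝ) := by
      push_cast
      linear_combination hN3
    exact_mod_cast this
  have q4 : 2*p2^2+p3^2+p4^2 = 2*p2*p3+p3*p4+1 := by
    have : ((2*p2^2+p3^2+p4^2 : ℕ) : ℝ) = ((2*p2*p3+p3*p4+1 : ℕ) : ℝ) := by
      push_cast
      linear_combination hN4
    exact_mod_cast this
  -- cross products
  have hX23 := hg.inn (alphaF 2) (alphaF 3)
  rw [hx2, hx3, cv_inner, a2cv, a3cv, cv_inner] at hX23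
  have hX24 := hg.inn (alphaF 2) (alphaF 4)
  rw [hx2, hx4, cv_inner, a2cv, a4cv, cv_inner] at hX24
  have hX34 := hg.inn (alphaF 3) (alphaF 4)
  rw [hx3, hx4, cv_inner, a3cv, a4cv, cv_inner] at hX34
  have x23 : 4*m2*n2+2*m3*n3+2*m4*n4+2 = 2*m2*n3+2*n2*m3+m3*n4+n3*m4 := by
    have : ((4*m2*n2+2*m3*n3+2*m4*n4+2 : ℕ) : ℝ)
        = ((2*m2*n3+2*n2*m3+m3*n4+n3*m4 : ℕ) : ℝ) := by
      push_cast
      linear_combination 2*hX23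
    exact_mod_cast this
  have x24 : 4*m2*p2+2*m3*p3+2*m4*p4 = 2*m2*p3+2*p2*m3+m3*p4+p3*m4 := by
    have : ((4*m2*p2+2*m3*p3+2*m4*p4 : ℕ) : ℝ)
        = ((2*m2*p3+2*p2*m3+m3*p4+p3*m4 : ℕ) : ℝ) := by
      push_cast
      linear_combination 2*hX24
    exact_mod_cast this
  have x34 : 4*n2*p2+2*n3*p3+2*n4*p4+1 = 2*n2*p3+2*p2*n3+n3*p4+p3*n4 := by
    have : ((4*n2*p2+2*n3*p3+2*n4*p4+1 : ℕ) : ℝ)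
        = ((2*n2*p3+2*p2*n3+n3*p4+p3*n4 : ℕ) : ℝ) := by
      push_cast
      linear_combination 2*hX34
    exact_mod_cast this
  have hvals : m2 = 1 ∧ m3 = 0 ∧ m4 = 0 ∧ n2 = 0 ∧ n3 = 1 ∧ n4 = 0
      ∧ p2 = 0 ∧ p3 = 0 ∧ p4 = 1 := by
    rcases candQ2 _ _ _ q2 with ⟨rfl,rfl,rfl⟩|⟨rfl,rfl,rfl⟩|⟨rfl,rfl,rfl⟩ <;>
    rcases candQ1 _ _ _ q3 with
      ⟨rfl,rfl,rfl⟩|⟨rfl,rfl,rfl⟩|⟨rfl,rfl,rfl⟩|⟨rfl,rfl,rfl⟩|⟨rfl,rfl,rfl⟩|⟨rfl,rfl,rfl⟩ <;>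
    rcases candQ1 _ _ _ q4 with
      ⟨rfl,rfl,rfl⟩|⟨rfl,rfl,rfl⟩|⟨rfl,rfl,rfl⟩|⟨rfl,rfl,rfl⟩|⟨rfl,rfl,rfl⟩|⟨rfl,rfl,rfl⟩ <;>
    omega
  obtain ⟨rfl, rfl, rfl, rfl, rfl, rfl, rfl, rfl, rfl⟩ := hvals
  refine ⟨?_, ?_, ?_⟩
  · rw [hx2]; exact cv_ext (by norm_num) (by norm_num) (by norm_num) (by norm_num)
  · rw [hx3]; exact cv_ext (by norm_num) (by norm_num) (by norm_num) (by norm_num)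
  · rw [hx4]; exact cv_ext (by norm_num) (by norm_num) (by norm_num) (by norm_num)

lemma detA2 {g : Equiv.Perm V4} (hg : Good [cv 1 1 0 0, cv 0 1 (-1) 0] C2 g)
    (k3 : IsNegF (g (alphaF 3))) (k4 : IsNegF (g (alphaF 4))) :
    g (alphaF 3) = cv (-(1/2)) (1/2) (1/2) (1/2) ∧ g (alphaF 4) = cv 0 0 0 (-1) := by
  have hf1 := hg.fix (cv 1 1 0 0) (by simp)
  have hf2 := hg.fix (cv 0 1 (-1) 0) (by simp)
  obtain ⟨n1, n2, n3, n4, hx3⟩ := neg_decomp k3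
  obtain ⟨p1, p2, p3, p4, hx4⟩ := neg_decomp k4
  have hA3 := hg.inn (alphaF 3) (cv 1 1 0 0)
  rw [hf1, hx3, cv_inner, a3cv, cv_inner] at hA3
  have hA4 := hg.inn (alphaF 4) (cv 1 1 0 0)
  rw [hf1, hx4, cv_inner, a4cv, cv_inner] at hA4
  have hn1 : n1 = 0 := by exact_mod_cast (by linarith : (n1:ℝ) = 0)
  have hp1 : p1 = 0 := by exact_mod_cast (by linarith : (p1:ℝ) = 0)
  subst hn1; subst hp1
  have hB3 := hg.inn (alphaF 3) (cv 0 1 (-1) 0)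
  rw [hf2, hx3, cv_inner, a3cv, cv_inner] at hB3
  have hB4 := hg.inn (alphaF 4) (cv 0 1 (-1) 0)
  rw [hf2, hx4, cv_inner, a4cv, cv_inner] at hB4
  have hn2 : n2 = 0 := by exact_mod_cast (by linarith : (n2:ℝ) = 0)
  have hp2 : p2 = 0 := by exact_mod_cast (by linarith : (p2:ℝ) = 0)
  subst hn2; subst hp2
  have hN3 := hg.inn (alphaF 3) (alphaF 3)
  rw [hx3, cv_inner, a3cv, cv_inner] at hN3
  have hN4 := hg.inn (alphaF 4) (alphaF 4)
  rw [hx4, cv_inner, a4cv, cv_inner] at hN4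
  have q3 : n3^2+n4^2 = n3*n4+1 := by
    have : ((n3^2+n4^2 : ℕ) : ℝ) = ((n3*n4+1 : ℕ) : ℝ) := by
      push_cast
      linear_combination hN3
    exact_mod_cast this
  have q4 : p3^2+p4^2 = p3*p4+1 := by
    have : ((p3^2+p4^2 : ℕ) : ℝ) = ((p3*p4+1 : ℕ) : ℝ) := by
      push_cast
      linear_combination hN4
    exact_mod_cast this
  have hX34 := hg.inn (alphaF 3) (alphaF 4)
  rw [hx3, hx4, cv_inner, a3cv, a4cv, cv_inner] at hX34
  have x34 : 2*n3*p3+2*n4*p4+1 = n3*p4+p3*n4 := by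
    have : ((2*n3*p3+2*n4*p4+1 : ℕ) : ℝ) = ((n3*p4+p3*n4 : ℕ) : ℝ) := by
      push_cast
      linear_combination 2*hX34
    exact_mod_cast this
  have hvals : (n3 = 0 ∧ n4 = 1 ∧ p3 = 1 ∧ p4 = 0) ∨ (n3 = 1 ∧ n4 = 0 ∧ p3 = 0 ∧ p4 = 1) := by
    rcases candA2 _ _ q3 with ⟨rfl,rfl⟩|⟨rfl,rfl⟩|⟨rfl,rfl⟩ <;>
    rcases candA2 _ _ q4 with ⟨rfl,rfl⟩|⟨rfl,rfl⟩|⟨rfl,rfl⟩ <;>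
    omega
  rcases hvals with ⟨rfl, rfl, rfl, rfl⟩ | ⟨rfl, rfl, rfl, rfl⟩
  · constructor
    · rw [hx3]; exact cv_ext (by norm_num) (by norm_num) (by norm_num) (by norm_num)
    · rw [hx4]; exact cv_ext (by norm_num) (by norm_num) (by norm_num) (by norm_num)
  · -- killed by the cubic invariant
    exfalso
    have hcub := hg.cub (alphaF 3 + (-1 : ℝ) • alphaF 4)
    rw [hg.add, hg.smul, hx3, hx4] at hcub
    rw [a3cv, a4cv] at hcub
    simp only [cv_smul, cv_add] at hcub
    simp only [C2, cv_inner] at hcub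
    norm_num at hcub

lemma detA1 {g : Equiv.Perm V4} {C : V4 → ℝ} (hg : Good [cv 1 1 0 0, cv 2 0 1 1] C g)
    (k2 : IsNegF (g (alphaF 2))) (k4 : IsNegF (g (alphaF 4))) :
    g (alphaF 2) = cv 0 0 (-1) 1 ∧ g (alphaF 4) = cv (-(1/2)) (1/2) (1/2) (1/2) := by
  have hf1 := hg.fix (cv 1 1 0 0) (by simp)
  have hf2 := hg.fix (cv 2 0 1 1) (by simp)
  obtain ⟨n1, n2, n3, n4, hx2⟩ := neg_decomp k2
  obtain ⟨p1, p2, p3, p4, hx4⟩ := neg_decomp k4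
  have hA2 := hg.inn (alphaF 2) (cv 1 1 0 0)
  rw [hf1, hx2, cv_inner, a2cv, cv_inner] at hA2
  have hA4 := hg.inn (alphaF 4) (cv 1 1 0 0)
  rw [hf1, hx4, cv_inner, a4cv, cv_inner] at hA4
  have hn1 : n1 = 0 := by exact_mod_cast (by linarith : (n1:ℝ) = 0)
  have hp1 : p1 = 0 := by exact_mod_cast (by linarith : (p1:ℝ) = 0)
  subst hn1; subst hp1
  have hB2 := hg.inn (alphaF 2) (cv 2 0 1 1)
  rw [hf2, hx2, cv_inner, a2cv, cv_inner] at hB2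
  have hB4 := hg.inn (alphaF 4) (cv 2 0 1 1)
  rw [hf2, hx4, cv_inner, a4cv, cv_inner] at hB4
  have hn3 : n3 = 0 := by exact_mod_cast (by linarith : (n3:ℝ) = 0)
  have hp3 : p3 = 0 := by exact_mod_cast (by linarith : (p3:ℝ) = 0)
  subst hn3; subst hp3
  have hN2 := hg.inn (alphaF 2) (alphaF 2)
  rw [hx2, cv_inner, a2cv, cv_inner] at hN2
  have hN4 := hg.inn (alphaF 4) (alphaF 4)
  rw [hx4, cv_inner, a4cv, cv_inner] at hN4
  have q2 : 2*n2^2+n4^2 = 2 := by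
    have : ((2*n2^2+n4^2 : ℕ) : ℝ) = ((2 : ℕ) : ℝ) := by
      push_cast
      linear_combination hN2
    exact_mod_cast this
  have q4 : 2*p2^2+p4^2 = 1 := by
    have : ((2*p2^2+p4^2 : ℕ) : ℝ) = ((1 : ℕ) : ℝ) := by
      push_cast
      linear_combination hN4
    exact_mod_cast this
  obtain ⟨rfl, rfl⟩ := candC2 _ _ q2
  obtain ⟨rfl, rfl⟩ := candC1 _ _ q4
  constructor
  · rw [hx2]; exact cv_ext (by norm_num) (by norm_num) (by norm_num) (by norm_num)
  · rw [hx4]; exact cv_ext (by norm_num) (by norm_num) (by norm_num) (by norm_num)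

lemma detB2 {g : Equiv.Perm V4} {C : V4 → ℝ} (hg : Good [cv 1 0 0 0, cv 0 1 0 0] C g)
    (k2 : IsNegF (g (alphaF 2))) (k3 : IsNegF (g (alphaF 3))) :
    g (alphaF 2) = cv 0 0 (-1) 1 ∧ g (alphaF 3) = cv 0 0 0 (-1) := by
  have hf1 := hg.fix (cv 1 0 0 0) (by simp)
  have hf2 := hg.fix (cv 0 1 0 0) (by simp)
  obtain ⟨n1, n2, n3, n4, hx2⟩ := neg_decomp k2
  obtain ⟨p1, p2, p3, p4, hx3⟩ := neg_decomp k3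
  have hA2 := hg.inn (alphaF 2) (cv 1 0 0 0)
  rw [hf1, hx2, cv_inner, a2cv, cv_inner] at hA2
  have hA3 := hg.inn (alphaF 3) (cv 1 0 0 0)
  rw [hf1, hx3, cv_inner, a3cv, cv_inner] at hA3
  have hn4 : n4 = 0 := by exact_mod_cast (by linarith : (n4:ℝ) = 0)
  have hp4 : p4 = 0 := by exact_mod_cast (by linarith : (p4:ℝ) = 0)
  subst hn4; subst hp4
  have hB2 := hg.inn (alphaF 2) (cv 0 1 0 0)
  rw [hf2, hx2, cv_inner, a2cv, cv_inner] at hB2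
  have hB3 := hg.inn (alphaF 3) (cv 0 1 0 0)
  rw [hf2, hx3, cv_inner, a3cv, cv_inner] at hB3
  have hn1 : n1 = 0 := by exact_mod_cast (by linarith : (n1:ℝ) = 0)
  have hp1 : p1 = 0 := by exact_mod_cast (by linarith : (p1:ℝ) = 0)
  subst hn1; subst hp1
  have hN2 := hg.inn (alphaF 2) (alphaF 2)
  rw [hx2, cv_inner, a2cv, cv_inner] at hN2
  have hN3 := hg.inn (alphaF 3) (alphaF 3)
  rw [hx3, cv_inner, a3cv, cv_inner] at hN3
  have q2 : 2*n2^2+n3^2 = 2*n2*n3+2 := by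
    have : ((2*n2^2+n3^2 : ℕ) : ℝ) = ((2*n2*n3+2 : ℕ) : ℝ) := by
      push_cast
      linear_combination hN2
    exact_mod_cast this
  have q3 : 2*p2^2+p3^2 = 2*p2*p3+1 := by
    have : ((2*p2^2+p3^2 : ℕ) : ℝ) = ((2*p2*p3+1 : ℕ) : ℝ) := by
      push_cast
      linear_combination hN3
    exact_mod_cast this
  have hX23 := hg.inn (alphaF 2) (alphaF 3)
  rw [hx2, hx3, cv_inner, a2cv, a3cv, cv_inner] at hX23
  have x23 : 2*n2*p2+n3*p3+1 = n2*p3+p2*n3 := by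
    have : ((2*n2*p2+n3*p3+1 : ℕ) : ℝ) = ((n2*p3+p2*n3 : ℕ) : ℝ) := by
      push_cast
      linear_combination hX23
    exact_mod_cast this
  have hvals : n2 = 1 ∧ n3 = 0 ∧ p2 = 0 ∧ p3 = 1 := by
    rcases candB2 _ _ q2 with ⟨rfl,rfl⟩|⟨rfl,rfl⟩ <;>
    rcases candB1 _ _ q3 with ⟨rfl,rfl⟩|⟨rfl,rfl⟩ <;>
    omega
  obtain ⟨rfl, rfl, rfl, rfl⟩ := hvals
  constructor
  · rw [hx2]; exact cv_ext (by norm_num) (by norm_num) (by norm_num) (by norm_num)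
  · rw [hx3]; exact cv_ext (by norm_num) (by norm_num) (by norm_num) (by norm_num)

lemma isPos_mk {x : V4} (hr : x ∈ RootF) (c1 c2 c3 c4 : ℕ)
    (h : x = cv ((c4:ℝ)/2) ((c1:ℝ) - (c4:ℝ)/2) (-(c1:ℝ)+(c2:ℝ)-(c4:ℝ)/2)
      (-(c2:ℝ)+(c3:ℝ)-(c4:ℝ)/2)) : IsPosF x := by
  refine ⟨hr, fun n => if n = 1 then c1 else if n = 2 then c2 else if n = 3 then c3 else c4, ?_⟩
  rw [sumc, h]
  exact cv_ext (by norm_num) (by norm_num) (by norm_num) (by norm_num)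

-- generator Good instances
lemma goodu_s2 : Good [cv 1 1 0 0] (fun _ => (0:ℝ)) (sF 2) := by
  apply good_sRefl
  · rw [a2cv, cv_inner]; norm_num
  · intro f hf; simp only [List.mem_singleton] at hf; subst hf; rw [a2cv, cv_inner]; norm_num
  · intro x; rfl
lemma goodu_s3 : Good [cv 1 1 0 0] (fun _ => (0:ℝ)) (sF 3) := by
  apply good_sRefl
  · rw [a3cv, cv_inner]; norm_num
  · intro f hf; simp only [List.mem_singleton] at hf; subst hf; rw [a3cv, cv_inner]; norm_num
  · intro x; rfl
lemma goodu_s4 : Good [cv 1 1 0 0] (fun _ => (0:ℝ)) (sF 4) := by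
  apply good_sRefl
  · rw [a4cv, cv_inner]; norm_num
  · intro f hf; simp only [List.mem_singleton] at hf; subst hf; rw [a4cv, cv_inner]; norm_num
  · intro x; rfl

lemma good2_s3 : Good [cv 1 1 0 0, cv 0 1 (-1) 0] C2 (sF 3) := by
  apply good_sRefl
  · rw [a3cv, cv_inner]; norm_num
  · intro f hf
    simp only [List.mem_cons, List.mem_singleton, List.not_mem_nil, or_false] at hf
    rcases hf with rfl | rfl <;> rw [a3cv, cv_inner] <;> norm_num
  · exact C2_sF3
lemma good2_s4 : Good [cv 1 1 0 0, cv 0 1 (-1) 0] C2 (sF 4) := by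
  apply good_sRefl
  · rw [a4cv, cv_inner]; norm_num
  · intro f hf
    simp only [List.mem_cons, List.mem_singleton, List.not_mem_nil, or_false] at hf
    rcases hf with rfl | rfl <;> rw [a4cv, cv_inner] <;> norm_num
  · exact C2_sF4

lemma good3_s2 : Good [cv 1 1 0 0, cv 2 0 1 1] (fun _ => (0:ℝ)) (sF 2) := by
  apply good_sRefl
  · rw [a2cv, cv_inner]; norm_num
  · intro f hf
    simp only [List.mem_cons, List.mem_singleton, List.not_mem_nil, or_false] at hf
    rcases hf with rfl | rfl <;> rw [a2cv, cv_inner] <;> norm_num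
  · intro x; rfl
lemma good3_s4 : Good [cv 1 1 0 0, cv 2 0 1 1] (fun _ => (0:ℝ)) (sF 4) := by
  apply good_sRefl
  · rw [a4cv, cv_inner]; norm_num
  · intro f hf
    simp only [List.mem_cons, List.mem_singleton, List.not_mem_nil, or_false] at hf
    rcases hf with rfl | rfl <;> rw [a4cv, cv_inner] <;> norm_num
  · intro x; rfl

lemma good4_s2 : Good [cv 1 0 0 0, cv 0 1 0 0] (fun _ => (0:ℝ)) (sF 2) := by
  apply good_sRefl
  · rw [a2cv, cv_inner]; norm_num
  · intro f hf
    simp only [List.mem_cons, List.mem_singleton, List.not_mem_nil, or_false] at hf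
    rcases hf with rfl | rfl <;> rw [a2cv, cv_inner] <;> norm_num
  · intro x; rfl
lemma good4_s3 : Good [cv 1 0 0 0, cv 0 1 0 0] (fun _ => (0:ℝ)) (sF 3) := by
  apply good_sRefl
  · rw [a3cv, cv_inner]; norm_num
  · intro f hf
    simp only [List.mem_cons, List.mem_singleton, List.not_mem_nil, or_false] at hf
    rcases hf with rfl | rfl <;> rw [a3cv, cv_inner] <;> norm_num
  · intro x; rfl

set_option maxHeartbeats 4000000 in
/-- Type `F₄`, `1 ≤ i ≤ 4`: let `v = s₁ ∘ s₂ ∘ s₃ ∘ s₂ ∘ s₄ ∘ s₃ ∘ s₁ ∘ s₂`, let `u` be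
the longest element of the parabolic Weyl group generated by `{sⱼ : j ≠ 1}` and let `u'` be
the longest element of the parabolic Weyl group generated by `{sⱼ : j ∉ {1, i}}`.  Then,
for `wᵢ = u' ∘ u ∘ v`, `wᵢ⁻¹(αᵢ)` is a negative root and `wᵢ⁻¹(αⱼ)` is a positive root for
every `j ≠ i`. -/
theorem stmt_18 (i : ℕ) (hi1 : 1 ≤ i) (hi2 : i ≤ 4)
    (u : Equiv.Perm (EuclideanSpace ℝ (Fin 4)))
    (hu : u ∈ Subgroup.closure {g | ∃ j, 1 ≤ j ∧ j ≤ 4 ∧ j ≠ 1 ∧ g = sF j})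
    (hneg : ∀ j, 1 ≤ j → j ≤ 4 → j ≠ 1 → IsNegF (u (alphaF j)))
    (u' : Equiv.Perm (EuclideanSpace ℝ (Fin 4)))
    (hu' : u' ∈ Subgroup.closure {g | ∃ j, 1 ≤ j ∧ j ≤ 4 ∧ j ≠ 1 ∧ j ≠ i ∧ g = sF j})
    (hneg' : ∀ j, 1 ≤ j → j ≤ 4 → j ≠ 1 → j ≠ i → IsNegF (u' (alphaF j))) :
    IsNegF ((u' * u * vF)⁻¹ (alphaF i)) ∧
    ∀ j, 1 ≤ j → j ≤ 4 → j ≠ i → IsPosF ((u' * u * vF)⁻¹ (alphaF j)) := by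
  interval_cases i
  · -- case i = 1
    have Gu : Good [cv 1 1 0 0] (fun _ => (0:ℝ)) u := by
      refine good_closure ?_ hu
      rintro g ⟨j, hj1, hj4, hne, rfl⟩
      interval_cases j
      · exact absurd rfl hne
      · exact goodu_s2
      · exact goodu_s3
      · exact goodu_s4
    have Gp : Good [cv 1 1 0 0] (fun _ => (0:ℝ)) u' := by
      refine good_closure ?_ hu'
      rintro g ⟨j, hj1, hj4, hne, hnei, rfl⟩
      interval_cases j
      · exact absurd rfl hne
      · exact goodu_s2
      · exact goodu_s3
      · exact goodu_s4
    have hufix := Gu.fix (cv 1 1 0 0) (by simp)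
    obtain ⟨hu2v, hu3v, hu4v⟩ := detC3 Gu (hneg 2 (by norm_num) (by norm_num) (by norm_num))
      (hneg 3 (by norm_num) (by norm_num) (by norm_num))
      (hneg 4 (by norm_num) (by norm_num) (by norm_num))
    have hpf1 := Gp.fix (cv 1 1 0 0) (by simp)
    obtain ⟨hp2, hp3, hp4⟩ := detC3 Gp
      (hneg' 2 (by norm_num) (by norm_num) (by norm_num) (by norm_num))
      (hneg' 3 (by norm_num) (by norm_num) (by norm_num) (by norm_num))
      (hneg' 4 (by norm_num) (by norm_num) (by norm_num) (by norm_num))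
    have hup1 : u' (cv 1 0 1 0) = alphaF 1 := by
      rw [show (cv 1 0 1 0 : V4) = ((1/2 : ℝ)) • cv 1 1 0 0 + (((3/2 : ℝ)) • alphaF 2 + (((2 : ℝ)) • alphaF 3 + ((1 : ℝ)) • alphaF 4)) by
          rw [a2cv, a3cv, a4cv]; simp only [cv_smul, cv_add]
          exact cv_ext (by norm_num) (by norm_num) (by norm_num) (by norm_num)]
      rw [apply_combo Gp hpf1 hp2 hp3 hp4, a1cv]
      simp only [cv_smul, cv_add]
      exact cv_ext (by norm_num) (by norm_num) (by norm_num) (by norm_num)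
    have huu1 : u (cv 0 1 (-1) 0) = cv 1 0 1 0 := by
      rw [show (cv 0 1 (-1) 0 : V4) = ((1/2 : ℝ)) • cv 1 1 0 0 + (((-3/2 : ℝ)) • alphaF 2 + (((-2 : ℝ)) • alphaF 3 + ((-1 : ℝ)) • alphaF 4)) by
          rw [a2cv, a3cv, a4cv]; simp only [cv_smul, cv_add]
          exact cv_ext (by norm_num) (by norm_num) (by norm_num) (by norm_num)]
      rw [apply_combo Gu hufix hu2v hu3v hu4v]
      simp only [cv_smul, cv_add]
      exact cv_ext (by norm_num) (by norm_num) (by norm_num) (by norm_num)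
    have key1 : (u' * u * vF)⁻¹ (alphaF 1) = cv (-1) 0 (-1) 0 := by
      have hv : vF (cv (-1) 0 (-1) 0) = cv 0 1 (-1) 0 := by
        simp only [vF, Equiv.Perm.mul_apply, sF1_cv, sF2_cv, sF3_cv, sF4_cv]
        exact cv_ext (by norm_num) (by norm_num) (by norm_num) (by norm_num)
      have happ : (u' * u * vF) (cv (-1) 0 (-1) 0) = alphaF 1 := by
        simp only [Equiv.Perm.mul_apply]
        rw [hv, huu1, hup1]
      rw [← happ, Equiv.Perm.inv_apply_self]
    have hup2 : u' (cv 0 0 (-1) 1) = alphaF 2 := by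
      rw [show (cv 0 0 (-1) 1 : V4) = ((0 : ℝ)) • cv 1 1 0 0 + (((-1 : ℝ)) • alphaF 2 + (((0 : ℝ)) • alphaF 3 + ((0 : ℝ)) • alphaF 4)) by
          rw [a2cv, a3cv, a4cv]; simp only [cv_smul, cv_add]
          exact cv_ext (by norm_num) (by norm_num) (by norm_num) (by norm_num)]
      rw [apply_combo Gp hpf1 hp2 hp3 hp4, a2cv]
      simp only [cv_smul, cv_add]
      exact cv_ext (by norm_num) (by norm_num) (by norm_num) (by norm_num)
    have huu2 : u (cv 0 0 1 (-1)) = cv 0 0 (-1) 1 := by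
      rw [show (cv 0 0 1 (-1) : V4) = ((0 : ℝ)) • cv 1 1 0 0 + (((1 : ℝ)) • alphaF 2 + (((0 : ℝ)) • alphaF 3 + ((0 : ℝ)) • alphaF 4)) by
          rw [a2cv, a3cv, a4cv]; simp only [cv_smul, cv_add]
          exact cv_ext (by norm_num) (by norm_num) (by norm_num) (by norm_num)]
      rw [apply_combo Gu hufix hu2v hu3v hu4v]
      simp only [cv_smul, cv_add]
      exact cv_ext (by norm_num) (by norm_num) (by norm_num) (by norm_num)
    have key2 : (u' * u * vF)⁻¹ (alphaF 2) = cv 0 0 1 1 := by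
      have hv : vF (cv 0 0 1 1) = cv 0 0 1 (-1) := by
        simp only [vF, Equiv.Perm.mul_apply, sF1_cv, sF2_cv, sF3_cv, sF4_cv]
        exact cv_ext (by norm_num) (by norm_num) (by norm_num) (by norm_num)
      have happ : (u' * u * vF) (cv 0 0 1 1) = alphaF 2 := by
        simp only [Equiv.Perm.mul_apply]
        rw [hv, huu2, hup2]
      rw [← happ, Equiv.Perm.inv_apply_self]
    have hup3 : u' (cv 0 0 0 (-1)) = alphaF 3 := by
      rw [show (cv 0 0 0 (-1) : V4) = ((0 : ℝ)) • cv 1 1 0 0 + (((0 : ℝ)) • alphaF 2 + (((-1 : ℝ)) • alphaF 3 + ((0 : ℝ)) • alphaF 4)) by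
          rw [a2cv, a3cv, a4cv]; simp only [cv_smul, cv_add]
          exact cv_ext (by norm_num) (by norm_num) (by norm_num) (by norm_num)]
      rw [apply_combo Gp hpf1 hp2 hp3 hp4, a3cv]
      simp only [cv_smul, cv_add]
      exact cv_ext (by norm_num) (by norm_num) (by norm_num) (by norm_num)
    have huu3 : u (cv 0 0 0 1) = cv 0 0 0 (-1) := by
      rw [show (cv 0 0 0 1 : V4) = ((0 : ℝ)) • cv 1 1 0 0 + (((0 : ℝ)) • alphaF 2 + (((1 : ℝ)) • alphaF 3 + ((0 : ℝ)) • alphaF 4)) by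
          rw [a2cv, a3cv, a4cv]; simp only [cv_smul, cv_add]
          exact cv_ext (by norm_num) (by norm_num) (by norm_num) (by norm_num)]
      rw [apply_combo Gu hufix hu2v hu3v hu4v]
      simp only [cv_smul, cv_add]
      exact cv_ext (by norm_num) (by norm_num) (by norm_num) (by norm_num)
    have key3 : (u' * u * vF)⁻¹ (alphaF 3) = cv (1/2) (-(1/2)) (-(1/2)) (-(1/2)) := by
      have hv : vF (cv (1/2) (-(1/2)) (-(1/2)) (-(1/2))) = cv 0 0 0 1 := by
        simp only [vF, Equiv.Perm.mul_apply, sF1_cv, sF2_cv, sF3_cv, sF4_cv]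
        exact cv_ext (by norm_num) (by norm_num) (by norm_num) (by norm_num)
      have happ : (u' * u * vF) (cv (1/2) (-(1/2)) (-(1/2)) (-(1/2))) = alphaF 3 := by
        simp only [Equiv.Perm.mul_apply]
        rw [hv, huu3, hup3]
      rw [← happ, Equiv.Perm.inv_apply_self]
    have hup4 : u' (cv (-(1/2)) (1/2) (1/2) (1/2)) = alphaF 4 := by
      rw [show (cv (-(1/2)) (1/2) (1/2) (1/2) : V4) = ((0 : ℝ)) • cv 1 1 0 0 + (((0 : ℝ)) • alphaF 2 + (((0 : ℝ)) • alphaF 3 + ((-1 : ℝ)) • alphaF 4)) by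
          rw [a2cv, a3cv, a4cv]; simp only [cv_smul, cv_add]
          exact cv_ext (by norm_num) (by norm_num) (by norm_num) (by norm_num)]
      rw [apply_combo Gp hpf1 hp2 hp3 hp4, a4cv]
      simp only [cv_smul, cv_add]
      exact cv_ext (by norm_num) (by norm_num) (by norm_num) (by norm_num)
    have huu4 : u (cv (1/2) (-(1/2)) (-(1/2)) (-(1/2))) = cv (-(1/2)) (1/2) (1/2) (1/2) := by
      rw [show (cv (1/2) (-(1/2)) (-(1/2)) (-(1/2)) : V4) = ((0 : ℝ)) • cv 1 1 0 0 + (((0 : ℝ)) • alphaF 2 + (((0 : ℝ)) • alphaF 3 + ((1 : ℝ)) • alphaF 4)) by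
          rw [a2cv, a3cv, a4cv]; simp only [cv_smul, cv_add]
          exact cv_ext (by norm_num) (by norm_num) (by norm_num) (by norm_num)]
      rw [apply_combo Gu hufix hu2v hu3v hu4v]
      simp only [cv_smul, cv_add]
      exact cv_ext (by norm_num) (by norm_num) (by norm_num) (by norm_num)
    have key4 : (u' * u * vF)⁻¹ (alphaF 4) = cv 0 1 0 0 := by
      have hv : vF (cv 0 1 0 0) = cv (1/2) (-(1/2)) (-(1/2)) (-(1/2)) := by
        simp only [vF, Equiv.Perm.mul_apply, sF1_cv, sF2_cv, sF3_cv, sF4_cv]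
        exact cv_ext (by norm_num) (by norm_num) (by norm_num) (by norm_num)
      have happ : (u' * u * vF) (cv 0 1 0 0) = alphaF 4 := by
        simp only [Equiv.Perm.mul_apply]
        rw [hv, huu4, hup4]
      rw [← happ, Equiv.Perm.inv_apply_self]
    refine ⟨?_, ?_⟩
    · rw [key1]
      show IsPosF (-(cv (-1) 0 (-1) 0))
      rw [show -(cv (-1) 0 (-1) 0) = cv 1 0 1 0 by rw [cv_neg]; exact cv_ext (by norm_num) (by norm_num) (by norm_num) (by norm_num)]
      refine isPos_mk ?_ 1 3 4 2 (cv_ext (by norm_num) (by norm_num) (by norm_num) (by norm_num))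
      exact Or.inr (Or.inl ⟨1, 3, by norm_num, by norm_num, by norm_num, Or.inl (by rw [E1cv, E3cv, cv_add]; exact cv_ext (by norm_num) (by norm_num) (by norm_num) (by norm_num))⟩)
    · intro j hj1 hj4 hji
      interval_cases j
      · exact absurd rfl hji
      · rw [key2]
        refine isPos_mk ?_ 0 1 2 0 (cv_ext (by norm_num) (by norm_num) (by norm_num) (by norm_num))
        exact Or.inr (Or.inl ⟨3, 4, by norm_num, by norm_num, by norm_num, Or.inl (by rw [E3cv, E4cv, cv_add]; exact cv_ext (by norm_num) (by norm_num) (by norm_num) (by norm_num))⟩)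
      · rw [key3]
        refine isPos_mk ?_ 0 0 0 1 (cv_ext (by norm_num) (by norm_num) (by norm_num) (by norm_num))
        exact Or.inr (Or.inr ⟨fun n => if n = 1 then 1 else if n = 2 then (-1) else if n = 3 then (-1) else (-1), fun n => by dsimp only; split_ifs <;> norm_num, by rw [E1cv, E2cv, E3cv, E4cv]; simp only [cv_smul, cv_add]; exact cv_ext (by norm_num) (by norm_num) (by norm_num) (by norm_num)⟩)
      · rw [key4]
        refine isPos_mk ?_ 1 1 1 0 (cv_ext (by norm_num) (by norm_num) (by norm_num) (by norm_num))
        exact Or.inl ⟨2, by norm_num, by norm_num, Or.inl (by rw [E2cv])⟩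
  · -- case i = 2
    have Gu : Good [cv 1 1 0 0] (fun _ => (0:ℝ)) u := by
      refine good_closure ?_ hu
      rintro g ⟨j, hj1, hj4, hne, rfl⟩
      interval_cases j
      · exact absurd rfl hne
      · exact goodu_s2
      · exact goodu_s3
      · exact goodu_s4
    have Gp : Good [cv 1 1 0 0, cv 0 1 (-1) 0] C2 u' := by
      refine good_closure ?_ hu'
      rintro g ⟨j, hj1, hj4, hne, hnei, rfl⟩
      interval_cases j
      · exact absurd rfl hne
      · exact absurd rfl hnei
      · exact good2_s3
      · exact good2_s4
    have hufix := Gu.fix (cv 1 1 0 0) (by simp)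
    obtain ⟨hu2v, hu3v, hu4v⟩ := detC3 Gu (hneg 2 (by norm_num) (by norm_num) (by norm_num))
      (hneg 3 (by norm_num) (by norm_num) (by norm_num))
      (hneg 4 (by norm_num) (by norm_num) (by norm_num))
    have hpf1 := Gp.fix (cv 1 1 0 0) (by simp)
    have hpf2 := Gp.fix (cv 0 1 (-1) 0) (by simp)
    obtain ⟨hp3, hp4⟩ := detA2 Gp
      (hneg' 3 (by norm_num) (by norm_num) (by norm_num) (by norm_num))
      (hneg' 4 (by norm_num) (by norm_num) (by norm_num) (by norm_num))
    have hup1 : u' (cv 0 1 (-1) 0) = alphaF 1 := by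
      rw [show (cv 0 1 (-1) 0 : V4) = ((0 : ℝ)) • cv 1 1 0 0 + (((1 : ℝ)) • cv 0 1 (-1) 0 + (((0 : ℝ)) • alphaF 3 + ((0 : ℝ)) • alphaF 4)) by
          rw [a3cv, a4cv]; simp only [cv_smul, cv_add]
          exact cv_ext (by norm_num) (by norm_num) (by norm_num) (by norm_num)]
      rw [apply_combo Gp hpf1 hpf2 hp3 hp4, a1cv]
      simp only [cv_smul, cv_add]
      exact cv_ext (by norm_num) (by norm_num) (by norm_num) (by norm_num)
    have huu1 : u (cv 1 0 1 0) = cv 0 1 (-1) 0 := by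
      rw [show (cv 1 0 1 0 : V4) = ((1/2 : ℝ)) • cv 1 1 0 0 + (((3/2 : ℝ)) • alphaF 2 + (((2 : ℝ)) • alphaF 3 + ((1 : ℝ)) • alphaF 4)) by
          rw [a2cv, a3cv, a4cv]; simp only [cv_smul, cv_add]
          exact cv_ext (by norm_num) (by norm_num) (by norm_num) (by norm_num)]
      rw [apply_combo Gu hufix hu2v hu3v hu4v]
      simp only [cv_smul, cv_add]
      exact cv_ext (by norm_num) (by norm_num) (by norm_num) (by norm_num)
    have key1 : (u' * u * vF)⁻¹ (alphaF 1) = cv 1 0 0 1 := by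
      have hv : vF (cv 1 0 0 1) = cv 1 0 1 0 := by
        simp only [vF, Equiv.Perm.mul_apply, sF1_cv, sF2_cv, sF3_cv, sF4_cv]
        exact cv_ext (by norm_num) (by norm_num) (by norm_num) (by norm_num)
      have happ : (u' * u * vF) (cv 1 0 0 1) = alphaF 1 := by
        simp only [Equiv.Perm.mul_apply]
        rw [hv, huu1, hup1]
      rw [← happ, Equiv.Perm.inv_apply_self]
    have hup2 : u' (cv 1 (-1) 0 0) = alphaF 2 := by
      rw [show (cv 1 (-1) 0 0 : V4) = ((1/3 : ℝ)) • cv 1 1 0 0 + (((-2/3 : ℝ)) • cv 0 1 (-1) 0 + (((2/3 : ℝ)) • alphaF 3 + ((4/3 : ℝ)) • alphaF 4)) by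
          rw [a3cv, a4cv]; simp only [cv_smul, cv_add]
          exact cv_ext (by norm_num) (by norm_num) (by norm_num) (by norm_num)]
      rw [apply_combo Gp hpf1 hpf2 hp3 hp4, a2cv]
      simp only [cv_smul, cv_add]
      exact cv_ext (by norm_num) (by norm_num) (by norm_num) (by norm_num)
    have huu2 : u (cv (-1) 1 0 0) = cv 1 (-1) 0 0 := by
      rw [show (cv (-1) 1 0 0 : V4) = ((0 : ℝ)) • cv 1 1 0 0 + (((-1 : ℝ)) • alphaF 2 + (((-2 : ℝ)) • alphaF 3 + ((-2 : ℝ)) • alphaF 4)) by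
          rw [a2cv, a3cv, a4cv]; simp only [cv_smul, cv_add]
          exact cv_ext (by norm_num) (by norm_num) (by norm_num) (by norm_num)]
      rw [apply_combo Gu hufix hu2v hu3v hu4v]
      simp only [cv_smul, cv_add]
      exact cv_ext (by norm_num) (by norm_num) (by norm_num) (by norm_num)
    have key2 : (u' * u * vF)⁻¹ (alphaF 2) = cv (-1) (-1) 0 0 := by
      have hv : vF (cv (-1) (-1) 0 0) = cv (-1) 1 0 0 := by
        simp only [vF, Equiv.Perm.mul_apply, sF1_cv, sF2_cv, sF3_cv, sF4_cv]
        exact cv_ext (by norm_num) (by norm_num) (by norm_num) (by norm_num)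
      have happ : (u' * u * vF) (cv (-1) (-1) 0 0) = alphaF 2 := by
        simp only [Equiv.Perm.mul_apply]
        rw [hv, huu2, hup2]
      rw [← happ, Equiv.Perm.inv_apply_self]
    have hup3 : u' (cv (-(1/2)) (1/2) (1/2) (1/2)) = alphaF 3 := by
      rw [show (cv (-(1/2)) (1/2) (1/2) (1/2) : V4) = ((0 : ℝ)) • cv 1 1 0 0 + (((0 : ℝ)) • cv 0 1 (-1) 0 + (((0 : ℝ)) • alphaF 3 + ((-1 : ℝ)) • alphaF 4)) by
          rw [a3cv, a4cv]; simp only [cv_smul, cv_add]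
          exact cv_ext (by norm_num) (by norm_num) (by norm_num) (by norm_num)]
      rw [apply_combo Gp hpf1 hpf2 hp3 hp4, a3cv]
      simp only [cv_smul, cv_add]
      exact cv_ext (by norm_num) (by norm_num) (by norm_num) (by norm_num)
    have huu3 : u (cv (1/2) (-(1/2)) (-(1/2)) (-(1/2))) = cv (-(1/2)) (1/2) (1/2) (1/2) := by
      rw [show (cv (1/2) (-(1/2)) (-(1/2)) (-(1/2)) : V4) = ((0 : ℝ)) • cv 1 1 0 0 + (((0 : ℝ)) • alphaF 2 + (((0 : ℝ)) • alphaF 3 + ((1 : ℝ)) • alphaF 4)) by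
          rw [a2cv, a3cv, a4cv]; simp only [cv_smul, cv_add]
          exact cv_ext (by norm_num) (by norm_num) (by norm_num) (by norm_num)]
      rw [apply_combo Gu hufix hu2v hu3v hu4v]
      simp only [cv_smul, cv_add]
      exact cv_ext (by norm_num) (by norm_num) (by norm_num) (by norm_num)
    have key3 : (u' * u * vF)⁻¹ (alphaF 3) = cv 0 1 0 0 := by
      have hv : vF (cv 0 1 0 0) = cv (1/2) (-(1/2)) (-(1/2)) (-(1/2)) := by
        simp only [vF, Equiv.Perm.mul_apply, sF1_cv, sF2_cv, sF3_cv, sF4_cv]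
        exact cv_ext (by norm_num) (by norm_num) (by norm_num) (by norm_num)
      have happ : (u' * u * vF) (cv 0 1 0 0) = alphaF 3 := by
        simp only [Equiv.Perm.mul_apply]
        rw [hv, huu3, hup3]
      rw [← happ, Equiv.Perm.inv_apply_self]
    have hup4 : u' (cv 0 0 0 (-1)) = alphaF 4 := by
      rw [show (cv 0 0 0 (-1) : V4) = ((0 : ℝ)) • cv 1 1 0 0 + (((0 : ℝ)) • cv 0 1 (-1) 0 + (((-1 : ℝ)) • alphaF 3 + ((0 : ℝ)) • alphaF 4)) by
          rw [a3cv, a4cv]; simp only [cv_smul, cv_add]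
          exact cv_ext (by norm_num) (by norm_num) (by norm_num) (by norm_num)]
      rw [apply_combo Gp hpf1 hpf2 hp3 hp4, a4cv]
      simp only [cv_smul, cv_add]
      exact cv_ext (by norm_num) (by norm_num) (by norm_num) (by norm_num)
    have huu4 : u (cv 0 0 0 1) = cv 0 0 0 (-1) := by
      rw [show (cv 0 0 0 1 : V4) = ((0 : ℝ)) • cv 1 1 0 0 + (((0 : ℝ)) • alphaF 2 + (((1 : ℝ)) • alphaF 3 + ((0 : ℝ)) • alphaF 4)) by
          rw [a2cv, a3cv, a4cv]; simp only [cv_smul, cv_add]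
          exact cv_ext (by norm_num) (by norm_num) (by norm_num) (by norm_num)]
      rw [apply_combo Gu hufix hu2v hu3v hu4v]
      simp only [cv_smul, cv_add]
      exact cv_ext (by norm_num) (by norm_num) (by norm_num) (by norm_num)
    have key4 : (u' * u * vF)⁻¹ (alphaF 4) = cv (1/2) (-(1/2)) (-(1/2)) (-(1/2)) := by
      have hv : vF (cv (1/2) (-(1/2)) (-(1/2)) (-(1/2))) = cv 0 0 0 1 := by
        simp only [vF, Equiv.Perm.mul_apply, sF1_cv, sF2_cv, sF3_cv, sF4_cv]
        exact cv_ext (by norm_num) (by norm_num) (by norm_num) (by norm_num)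
      have happ : (u' * u * vF) (cv (1/2) (-(1/2)) (-(1/2)) (-(1/2))) = alphaF 4 := by
        simp only [Equiv.Perm.mul_apply]
        rw [hv, huu4, hup4]
      rw [← happ, Equiv.Perm.inv_apply_self]
    refine ⟨?_, ?_⟩
    · rw [key2]
      show IsPosF (-(cv (-1) (-1) 0 0))
      rw [show -(cv (-1) (-1) 0 0) = cv 1 1 0 0 by rw [cv_neg]; exact cv_ext (by norm_num) (by norm_num) (by norm_num) (by norm_num)]
      refine isPos_mk ?_ 2 3 4 2 (cv_ext (by norm_num) (by norm_num) (by norm_num) (by norm_num))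
      exact Or.inr (Or.inl ⟨1, 2, by norm_num, by norm_num, by norm_num, Or.inl (by rw [E1cv, E2cv, cv_add]; exact cv_ext (by norm_num) (by norm_num) (by norm_num) (by norm_num))⟩)
    · intro j hj1 hj4 hji
      interval_cases j
      · rw [key1]
        refine isPos_mk ?_ 1 2 4 2 (cv_ext (by norm_num) (by norm_num) (by norm_num) (by norm_num))
        exact Or.inr (Or.inl ⟨1, 4, by norm_num, by norm_num, by norm_num, Or.inl (by rw [E1cv, E4cv, cv_add]; exact cv_ext (by norm_num) (by norm_num) (by norm_num) (by norm_num))⟩)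
      · exact absurd rfl hji
      · rw [key3]
        refine isPos_mk ?_ 1 1 1 0 (cv_ext (by norm_num) (by norm_num) (by norm_num) (by norm_num))
        exact Or.inl ⟨2, by norm_num, by norm_num, Or.inl (by rw [E2cv])⟩
      · rw [key4]
        refine isPos_mk ?_ 0 0 0 1 (cv_ext (by norm_num) (by norm_num) (by norm_num) (by norm_num))
        exact Or.inr (Or.inr ⟨fun n => if n = 1 then 1 else if n = 2 then (-1) else if n = 3 then (-1) else (-1), fun n => by dsimp only; split_ifs <;> norm_num, by rw [E1cv, E2cv, E3cv, E4cv]; simp only [cv_smul, cv_add]; exact cv_ext (by norm_num) (by norm_num) (by norm_num) (by norm_num)⟩)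
  · -- case i = 3
    have Gu : Good [cv 1 1 0 0] (fun _ => (0:ℝ)) u := by
      refine good_closure ?_ hu
      rintro g ⟨j, hj1, hj4, hne, rfl⟩
      interval_cases j
      · exact absurd rfl hne
      · exact goodu_s2
      · exact goodu_s3
      · exact goodu_s4
    have Gp : Good [cv 1 1 0 0, cv 2 0 1 1] (fun _ => (0:ℝ)) u' := by
      refine good_closure ?_ hu'
      rintro g ⟨j, hj1, hj4, hne, hnei, rfl⟩
      interval_cases j
      · exact absurd rfl hne
      · exact good3_s2
      · exact absurd rfl hnei
      · exact good3_s4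
    have hufix := Gu.fix (cv 1 1 0 0) (by simp)
    obtain ⟨hu2v, hu3v, hu4v⟩ := detC3 Gu (hneg 2 (by norm_num) (by norm_num) (by norm_num))
      (hneg 3 (by norm_num) (by norm_num) (by norm_num))
      (hneg 4 (by norm_num) (by norm_num) (by norm_num))
    have hpf1 := Gp.fix (cv 1 1 0 0) (by simp)
    have hpf2 := Gp.fix (cv 2 0 1 1) (by simp)
    obtain ⟨hp2, hp4⟩ := detA1 Gp
      (hneg' 2 (by norm_num) (by norm_num) (by norm_num) (by norm_num))
      (hneg' 4 (by norm_num) (by norm_num) (by norm_num) (by norm_num))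
    have hup1 : u' (cv 0 1 0 (-1)) = alphaF 1 := by
      rw [show (cv 0 1 0 (-1) : V4) = ((1 : ℝ)) • cv 1 1 0 0 + (((-1/2 : ℝ)) • cv 2 0 1 1 + (((1/2 : ℝ)) • alphaF 2 + ((0 : ℝ)) • alphaF 4)) by
          rw [a2cv, a4cv]; simp only [cv_smul, cv_add]
          exact cv_ext (by norm_num) (by norm_num) (by norm_num) (by norm_num)]
      rw [apply_combo Gp hpf1 hpf2 hp2 hp4, a1cv]
      simp only [cv_smul, cv_add]
      exact cv_ext (by norm_num) (by norm_num) (by norm_num) (by norm_num)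
    have huu1 : u (cv 1 0 0 1) = cv 0 1 0 (-1) := by
      rw [show (cv 1 0 0 1 : V4) = ((1/2 : ℝ)) • cv 1 1 0 0 + (((1/2 : ℝ)) • alphaF 2 + (((2 : ℝ)) • alphaF 3 + ((1 : ℝ)) • alphaF 4)) by
          rw [a2cv, a3cv, a4cv]; simp only [cv_smul, cv_add]
          exact cv_ext (by norm_num) (by norm_num) (by norm_num) (by norm_num)]
      rw [apply_combo Gu hufix hu2v hu3v hu4v]
      simp only [cv_smul, cv_add]
      exact cv_ext (by norm_num) (by norm_num) (by norm_num) (by norm_num)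
    have key1 : (u' * u * vF)⁻¹ (alphaF 1) = cv 1 0 (-1) 0 := by
      have hv : vF (cv 1 0 (-1) 0) = cv 1 0 0 1 := by
        simp only [vF, Equiv.Perm.mul_apply, sF1_cv, sF2_cv, sF3_cv, sF4_cv]
        exact cv_ext (by norm_num) (by norm_num) (by norm_num) (by norm_num)
      have happ : (u' * u * vF) (cv 1 0 (-1) 0) = alphaF 1 := by
        simp only [Equiv.Perm.mul_apply]
        rw [hv, huu1, hup1]
      rw [← happ, Equiv.Perm.inv_apply_self]
    have hup2 : u' (cv 0 0 (-1) 1) = alphaF 2 := by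
      rw [show (cv 0 0 (-1) 1 : V4) = ((0 : ℝ)) • cv 1 1 0 0 + (((0 : ℝ)) • cv 2 0 1 1 + (((-1 : ℝ)) • alphaF 2 + ((0 : ℝ)) • alphaF 4)) by
          rw [a2cv, a4cv]; simp only [cv_smul, cv_add]
          exact cv_ext (by norm_num) (by norm_num) (by norm_num) (by norm_num)]
      rw [apply_combo Gp hpf1 hpf2 hp2 hp4, a2cv]
      simp only [cv_smul, cv_add]
      exact cv_ext (by norm_num) (by norm_num) (by norm_num) (by norm_num)
    have huu2 : u (cv 0 0 1 (-1)) = cv 0 0 (-1) 1 := by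
      rw [show (cv 0 0 1 (-1) : V4) = ((0 : ℝ)) • cv 1 1 0 0 + (((1 : ℝ)) • alphaF 2 + (((0 : ℝ)) • alphaF 3 + ((0 : ℝ)) • alphaF 4)) by
          rw [a2cv, a3cv, a4cv]; simp only [cv_smul, cv_add]
          exact cv_ext (by norm_num) (by norm_num) (by norm_num) (by norm_num)]
      rw [apply_combo Gu hufix hu2v hu3v hu4v]
      simp only [cv_smul, cv_add]
      exact cv_ext (by norm_num) (by norm_num) (by norm_num) (by norm_num)
    have key2 : (u' * u * vF)⁻¹ (alphaF 2) = cv 0 0 1 1 := by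
      have hv : vF (cv 0 0 1 1) = cv 0 0 1 (-1) := by
        simp only [vF, Equiv.Perm.mul_apply, sF1_cv, sF2_cv, sF3_cv, sF4_cv]
        exact cv_ext (by norm_num) (by norm_num) (by norm_num) (by norm_num)
      have happ : (u' * u * vF) (cv 0 0 1 1) = alphaF 2 := by
        simp only [Equiv.Perm.mul_apply]
        rw [hv, huu2, hup2]
      rw [← happ, Equiv.Perm.inv_apply_self]
    have hup3 : u' (cv (1/2) (-(1/2)) (1/2) (-(1/2))) = alphaF 3 := by
      rw [show (cv (1/2) (-(1/2)) (1/2) (-(1/2)) : V4) = ((-1/4 : ℝ)) • cv 1 1 0 0 + (((1/4 : ℝ)) • cv 2 0 1 1 + (((1/2 : ℝ)) • alphaF 2 + ((1/2 : ℝ)) • alphaF 4)) by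
          rw [a2cv, a4cv]; simp only [cv_smul, cv_add]
          exact cv_ext (by norm_num) (by norm_num) (by norm_num) (by norm_num)]
      rw [apply_combo Gp hpf1 hpf2 hp2 hp4, a3cv]
      simp only [cv_smul, cv_add]
      exact cv_ext (by norm_num) (by norm_num) (by norm_num) (by norm_num)
    have huu3 : u (cv (-(1/2)) (1/2) (-(1/2)) (1/2)) = cv (1/2) (-(1/2)) (1/2) (-(1/2)) := by
      rw [show (cv (-(1/2)) (1/2) (-(1/2)) (1/2) : V4) = ((0 : ℝ)) • cv 1 1 0 0 + (((-1 : ℝ)) • alphaF 2 + (((-1 : ℝ)) • alphaF 3 + ((-1 : ℝ)) • alphaF 4)) by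
          rw [a2cv, a3cv, a4cv]; simp only [cv_smul, cv_add]
          exact cv_ext (by norm_num) (by norm_num) (by norm_num) (by norm_num)]
      rw [apply_combo Gu hufix hu2v hu3v hu4v]
      simp only [cv_smul, cv_add]
      exact cv_ext (by norm_num) (by norm_num) (by norm_num) (by norm_num)
    have key3 : (u' * u * vF)⁻¹ (alphaF 3) = cv (-(1/2)) (-(1/2)) (-(1/2)) (-(1/2)) := by
      have hv : vF (cv (-(1/2)) (-(1/2)) (-(1/2)) (-(1/2))) = cv (-(1/2)) (1/2) (-(1/2)) (1/2) := by
        simp only [vF, Equiv.Perm.mul_apply, sF1_cv, sF2_cv, sF3_cv, sF4_cv]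
        exact cv_ext (by norm_num) (by norm_num) (by norm_num) (by norm_num)
      have happ : (u' * u * vF) (cv (-(1/2)) (-(1/2)) (-(1/2)) (-(1/2))) = alphaF 3 := by
        simp only [Equiv.Perm.mul_apply]
        rw [hv, huu3, hup3]
      rw [← happ, Equiv.Perm.inv_apply_self]
    have hup4 : u' (cv (-(1/2)) (1/2) (1/2) (1/2)) = alphaF 4 := by
      rw [show (cv (-(1/2)) (1/2) (1/2) (1/2) : V4) = ((0 : ℝ)) • cv 1 1 0 0 + (((0 : ℝ)) • cv 2 0 1 1 + (((0 : ℝ)) • alphaF 2 + ((-1 : ℝ)) • alphaF 4)) by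
          rw [a2cv, a4cv]; simp only [cv_smul, cv_add]
          exact cv_ext (by norm_num) (by norm_num) (by norm_num) (by norm_num)]
      rw [apply_combo Gp hpf1 hpf2 hp2 hp4, a4cv]
      simp only [cv_smul, cv_add]
      exact cv_ext (by norm_num) (by norm_num) (by norm_num) (by norm_num)
    have huu4 : u (cv (1/2) (-(1/2)) (-(1/2)) (-(1/2))) = cv (-(1/2)) (1/2) (1/2) (1/2) := by
      rw [show (cv (1/2) (-(1/2)) (-(1/2)) (-(1/2)) : V4) = ((0 : ℝ)) • cv 1 1 0 0 + (((0 : ℝ)) • alphaF 2 + (((0 : ℝ)) • alphaF 3 + ((1 : ℝ)) • alphaF 4)) by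
          rw [a2cv, a3cv, a4cv]; simp only [cv_smul, cv_add]
          exact cv_ext (by norm_num) (by norm_num) (by norm_num) (by norm_num)]
      rw [apply_combo Gu hufix hu2v hu3v hu4v]
      simp only [cv_smul, cv_add]
      exact cv_ext (by norm_num) (by norm_num) (by norm_num) (by norm_num)
    have key4 : (u' * u * vF)⁻¹ (alphaF 4) = cv 0 1 0 0 := by
      have hv : vF (cv 0 1 0 0) = cv (1/2) (-(1/2)) (-(1/2)) (-(1/2)) := by
        simp only [vF, Equiv.Perm.mul_apply, sF1_cv, sF2_cv, sF3_cv, sF4_cv]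
        exact cv_ext (by norm_num) (by norm_num) (by norm_num) (by norm_num)
      have happ : (u' * u * vF) (cv 0 1 0 0) = alphaF 4 := by
        simp only [Equiv.Perm.mul_apply]
        rw [hv, huu4, hup4]
      rw [← happ, Equiv.Perm.inv_apply_self]
    refine ⟨?_, ?_⟩
    · rw [key3]
      show IsPosF (-(cv (-(1/2)) (-(1/2)) (-(1/2)) (-(1/2))))
      rw [show -(cv (-(1/2)) (-(1/2)) (-(1/2)) (-(1/2))) = cv (1/2) (1/2) (1/2) (1/2) by rw [cv_neg]; exact cv_ext (by norm_num) (by norm_num) (by norm_num) (by norm_num)]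
      refine isPos_mk ?_ 1 2 3 1 (cv_ext (by norm_num) (by norm_num) (by norm_num) (by norm_num))
      exact Or.inr (Or.inr ⟨fun n => if n = 1 then 1 else if n = 2 then 1 else if n = 3 then 1 else 1, fun n => by dsimp only; split_ifs <;> norm_num, by rw [E1cv, E2cv, E3cv, E4cv]; simp only [cv_smul, cv_add]; exact cv_ext (by norm_num) (by norm_num) (by norm_num) (by norm_num)⟩)
    · intro j hj1 hj4 hji
      interval_cases j
      · rw [key1]
        refine isPos_mk ?_ 1 1 2 2 (cv_ext (by norm_num) (by norm_num) (by norm_num) (by norm_num))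
        exact Or.inr (Or.inl ⟨1, 3, by norm_num, by norm_num, by norm_num, Or.inr (Or.inr (Or.inl (by rw [E1cv, E3cv, cv_sub]; exact cv_ext (by norm_num) (by norm_num) (by norm_num) (by norm_num))))⟩)
      · rw [key2]
        refine isPos_mk ?_ 0 1 2 0 (cv_ext (by norm_num) (by norm_num) (by norm_num) (by norm_num))
        exact Or.inr (Or.inl ⟨3, 4, by norm_num, by norm_num, by norm_num, Or.inl (by rw [E3cv, E4cv, cv_add]; exact cv_ext (by norm_num) (by norm_num) (by norm_num) (by norm_num))⟩)
      · exact absurd rfl hji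
      · rw [key4]
        refine isPos_mk ?_ 1 1 1 0 (cv_ext (by norm_num) (by norm_num) (by norm_num) (by norm_num))
        exact Or.inl ⟨2, by norm_num, by norm_num, Or.inl (by rw [E2cv])⟩
  · -- case i = 4
    have Gu : Good [cv 1 1 0 0] (fun _ => (0:ℝ)) u := by
      refine good_closure ?_ hu
      rintro g ⟨j, hj1, hj4, hne, rfl⟩
      interval_cases j
      · exact absurd rfl hne
      · exact goodu_s2
      · exact goodu_s3
      · exact goodu_s4
    have Gp : Good [cv 1 0 0 0, cv 0 1 0 0] (fun _ => (0:ℝ)) u' := by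
      refine good_closure ?_ hu'
      rintro g ⟨j, hj1, hj4, hne, hnei, rfl⟩
      interval_cases j
      · exact absurd rfl hne
      · exact good4_s2
      · exact good4_s3
      · exact absurd rfl hnei
    have hufix := Gu.fix (cv 1 1 0 0) (by simp)
    obtain ⟨hu2v, hu3v, hu4v⟩ := detC3 Gu (hneg 2 (by norm_num) (by norm_num) (by norm_num))
      (hneg 3 (by norm_num) (by norm_num) (by norm_num))
      (hneg 4 (by norm_num) (by norm_num) (by norm_num))
    have hpf1 := Gp.fix (cv 1 0 0 0) (by simp)
    have hpf2 := Gp.fix (cv 0 1 0 0) (by simp)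
    obtain ⟨hp2, hp3⟩ := detB2 Gp
      (hneg' 2 (by norm_num) (by norm_num) (by norm_num) (by norm_num))
      (hneg' 3 (by norm_num) (by norm_num) (by norm_num) (by norm_num))
    have hup1 : u' (cv 0 1 1 0) = alphaF 1 := by
      rw [show (cv 0 1 1 0 : V4) = ((0 : ℝ)) • cv 1 0 0 0 + (((1 : ℝ)) • cv 0 1 0 0 + (((1 : ℝ)) • alphaF 2 + ((1 : ℝ)) • alphaF 3)) by
          rw [a2cv, a3cv]; simp only [cv_smul, cv_add]
          exact cv_ext (by norm_num) (by norm_num) (by norm_num) (by norm_num)]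
      rw [apply_combo Gp hpf1 hpf2 hp2 hp3, a1cv]
      simp only [cv_smul, cv_add]
      exact cv_ext (by norm_num) (by norm_num) (by norm_num) (by norm_num)
    have huu1 : u (cv 1 0 (-1) 0) = cv 0 1 1 0 := by
      rw [show (cv 1 0 (-1) 0 : V4) = ((1/2 : ℝ)) • cv 1 1 0 0 + (((-1/2 : ℝ)) • alphaF 2 + (((0 : ℝ)) • alphaF 3 + ((1 : ℝ)) • alphaF 4)) by
          rw [a2cv, a3cv, a4cv]; simp only [cv_smul, cv_add]
          exact cv_ext (by norm_num) (by norm_num) (by norm_num) (by norm_num)]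
      rw [apply_combo Gu hufix hu2v hu3v hu4v]
      simp only [cv_smul, cv_add]
      exact cv_ext (by norm_num) (by norm_num) (by norm_num) (by norm_num)
    have key1 : (u' * u * vF)⁻¹ (alphaF 1) = cv 0 1 (-1) 0 := by
      have hv : vF (cv 0 1 (-1) 0) = cv 1 0 (-1) 0 := by
        simp only [vF, Equiv.Perm.mul_apply, sF1_cv, sF2_cv, sF3_cv, sF4_cv]
        exact cv_ext (by norm_num) (by norm_num) (by norm_num) (by norm_num)
      have happ : (u' * u * vF) (cv 0 1 (-1) 0) = alphaF 1 := by
        simp only [Equiv.Perm.mul_apply]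
        rw [hv, huu1, hup1]
      rw [← happ, Equiv.Perm.inv_apply_self]
    have hup2 : u' (cv 0 0 (-1) 1) = alphaF 2 := by
      rw [show (cv 0 0 (-1) 1 : V4) = ((0 : ℝ)) • cv 1 0 0 0 + (((0 : ℝ)) • cv 0 1 0 0 + (((-1 : ℝ)) • alphaF 2 + ((0 : ℝ)) • alphaF 3)) by
          rw [a2cv, a3cv]; simp only [cv_smul, cv_add]
          exact cv_ext (by norm_num) (by norm_num) (by norm_num) (by norm_num)]
      rw [apply_combo Gp hpf1 hpf2 hp2 hp3, a2cv]
      simp only [cv_smul, cv_add]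
      exact cv_ext (by norm_num) (by norm_num) (by norm_num) (by norm_num)
    have huu2 : u (cv 0 0 1 (-1)) = cv 0 0 (-1) 1 := by
      rw [show (cv 0 0 1 (-1) : V4) = ((0 : ℝ)) • cv 1 1 0 0 + (((1 : ℝ)) • alphaF 2 + (((0 : ℝ)) • alphaF 3 + ((0 : ℝ)) • alphaF 4)) by
          rw [a2cv, a3cv, a4cv]; simp only [cv_smul, cv_add]
          exact cv_ext (by norm_num) (by norm_num) (by norm_num) (by norm_num)]
      rw [apply_combo Gu hufix hu2v hu3v hu4v]
      simp only [cv_smul, cv_add]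
      exact cv_ext (by norm_num) (by norm_num) (by norm_num) (by norm_num)
    have key2 : (u' * u * vF)⁻¹ (alphaF 2) = cv 0 0 1 1 := by
      have hv : vF (cv 0 0 1 1) = cv 0 0 1 (-1) := by
        simp only [vF, Equiv.Perm.mul_apply, sF1_cv, sF2_cv, sF3_cv, sF4_cv]
        exact cv_ext (by norm_num) (by norm_num) (by norm_num) (by norm_num)
      have happ : (u' * u * vF) (cv 0 0 1 1) = alphaF 2 := by
        simp only [Equiv.Perm.mul_apply]
        rw [hv, huu2, hup2]
      rw [← happ, Equiv.Perm.inv_apply_self]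
    have hup3 : u' (cv 0 0 0 (-1)) = alphaF 3 := by
      rw [show (cv 0 0 0 (-1) : V4) = ((0 : ℝ)) • cv 1 0 0 0 + (((0 : ℝ)) • cv 0 1 0 0 + (((0 : ℝ)) • alphaF 2 + ((-1 : ℝ)) • alphaF 3)) by
          rw [a2cv, a3cv]; simp only [cv_smul, cv_add]
          exact cv_ext (by norm_num) (by norm_num) (by norm_num) (by norm_num)]
      rw [apply_combo Gp hpf1 hpf2 hp2 hp3, a3cv]
      simp only [cv_smul, cv_add]
      exact cv_ext (by norm_num) (by norm_num) (by norm_num) (by norm_num)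
    have huu3 : u (cv 0 0 0 1) = cv 0 0 0 (-1) := by
      rw [show (cv 0 0 0 1 : V4) = ((0 : ℝ)) • cv 1 1 0 0 + (((0 : ℝ)) • alphaF 2 + (((1 : ℝ)) • alphaF 3 + ((0 : ℝ)) • alphaF 4)) by
          rw [a2cv, a3cv, a4cv]; simp only [cv_smul, cv_add]
          exact cv_ext (by norm_num) (by norm_num) (by norm_num) (by norm_num)]
      rw [apply_combo Gu hufix hu2v hu3v hu4v]
      simp only [cv_smul, cv_add]
      exact cv_ext (by norm_num) (by norm_num) (by norm_num) (by norm_num)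
    have key3 : (u' * u * vF)⁻¹ (alphaF 3) = cv (1/2) (-(1/2)) (-(1/2)) (-(1/2)) := by
      have hv : vF (cv (1/2) (-(1/2)) (-(1/2)) (-(1/2))) = cv 0 0 0 1 := by
        simp only [vF, Equiv.Perm.mul_apply, sF1_cv, sF2_cv, sF3_cv, sF4_cv]
        exact cv_ext (by norm_num) (by norm_num) (by norm_num) (by norm_num)
      have happ : (u' * u * vF) (cv (1/2) (-(1/2)) (-(1/2)) (-(1/2))) = alphaF 3 := by
        simp only [Equiv.Perm.mul_apply]
        rw [hv, huu3, hup3]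
      rw [← happ, Equiv.Perm.inv_apply_self]
    have hup4 : u' (cv (1/2) (-(1/2)) (1/2) (1/2)) = alphaF 4 := by
      rw [show (cv (1/2) (-(1/2)) (1/2) (1/2) : V4) = ((1/2 : ℝ)) • cv 1 0 0 0 + (((-1/2 : ℝ)) • cv 0 1 0 0 + (((1/2 : ℝ)) • alphaF 2 + ((1 : ℝ)) • alphaF 3)) by
          rw [a2cv, a3cv]; simp only [cv_smul, cv_add]
          exact cv_ext (by norm_num) (by norm_num) (by norm_num) (by norm_num)]
      rw [apply_combo Gp hpf1 hpf2 hp2 hp3, a4cv]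
      simp only [cv_smul, cv_add]
      exact cv_ext (by norm_num) (by norm_num) (by norm_num) (by norm_num)
    have huu4 : u (cv (-(1/2)) (1/2) (-(1/2)) (-(1/2))) = cv (1/2) (-(1/2)) (1/2) (1/2) := by
      rw [show (cv (-(1/2)) (1/2) (-(1/2)) (-(1/2)) : V4) = ((0 : ℝ)) • cv 1 1 0 0 + (((-1 : ℝ)) • alphaF 2 + (((-2 : ℝ)) • alphaF 3 + ((-1 : ℝ)) • alphaF 4)) by
          rw [a2cv, a3cv, a4cv]; simp only [cv_smul, cv_add]
          exact cv_ext (by norm_num) (by norm_num) (by norm_num) (by norm_num)]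
      rw [apply_combo Gu hufix hu2v hu3v hu4v]
      simp only [cv_smul, cv_add]
      exact cv_ext (by norm_num) (by norm_num) (by norm_num) (by norm_num)
    have key4 : (u' * u * vF)⁻¹ (alphaF 4) = cv (-1) 0 0 0 := by
      have hv : vF (cv (-1) 0 0 0) = cv (-(1/2)) (1/2) (-(1/2)) (-(1/2)) := by
        simp only [vF, Equiv.Perm.mul_apply, sF1_cv, sF2_cv, sF3_cv, sF4_cv]
        exact cv_ext (by norm_num) (by norm_num) (by norm_num) (by norm_num)
      have happ : (u' * u * vF) (cv (-1) 0 0 0) = alphaF 4 := by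
        simp only [Equiv.Perm.mul_apply]
        rw [hv, huu4, hup4]
      rw [← happ, Equiv.Perm.inv_apply_self]
    refine ⟨?_, ?_⟩
    · rw [key4]
      show IsPosF (-(cv (-1) 0 0 0))
      rw [show -(cv (-1) 0 0 0) = cv 1 0 0 0 by rw [cv_neg]; exact cv_ext (by norm_num) (by norm_num) (by norm_num) (by norm_num)]
      refine isPos_mk ?_ 1 2 3 2 (cv_ext (by norm_num) (by norm_num) (by norm_num) (by norm_num))
      exact Or.inl ⟨1, by norm_num, by norm_num, Or.inl (by rw [E1cv])⟩
    · intro j hj1 hj4 hji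
      interval_cases j
      · rw [key1]
        refine isPos_mk ?_ 1 0 0 0 (cv_ext (by norm_num) (by norm_num) (by norm_num) (by norm_num))
        exact Or.inr (Or.inl ⟨2, 3, by norm_num, by norm_num, by norm_num, Or.inr (Or.inr (Or.inl (by rw [E2cv, E3cv, cv_sub]; exact cv_ext (by norm_num) (by norm_num) (by norm_num) (by norm_num))))⟩)
      · rw [key2]
        refine isPos_mk ?_ 0 1 2 0 (cv_ext (by norm_num) (by norm_num) (by norm_num) (by norm_num))
        exact Or.inr (Or.inl ⟨3, 4, by norm_num, by norm_num, by norm_num, Or.inl (by rw [E3cv, E4cv, cv_add]; exact cv_ext (by norm_num) (by norm_num) (by norm_num) (by norm_num))⟩)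
      · rw [key3]
        refine isPos_mk ?_ 0 0 0 1 (cv_ext (by norm_num) (by norm_num) (by norm_num) (by norm_num))
        exact Or.inr (Or.inr ⟨fun n => if n = 1 then 1 else if n = 2 then (-1) else if n = 3 then (-1) else (-1), fun n => by dsimp only; split_ifs <;> norm_num, by rw [E1cv, E2cv, E3cv, E4cv]; simp only [cv_smul, cv_add]; exact cv_ext (by norm_num) (by norm_num) (by norm_num) (by norm_num)⟩)
      · exact absurd rfl hji
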